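/- Let ε > 0, let f(t) = A(t)e^{iφ(t)} be a function of intrinsic-mode type with accuracy ε, and let N be a positive integer. Then the modulated signal g(t) = e^{iNt} f(t) satisfies ‖P₋g‖²_{L²(0,2π)} ≤ (8π²/‖A‖²_{L²(0,2π)}) · (‖A′‖²_{L^∞} + ε²‖A‖²_{L^∞}) / (inf_{0<t<2π} φ′(t) + N) · ‖f‖²_{L²(0,2π)}; in particular the bound on the anti-holomorphic part tends to 0 as N → ∞. -/

import Mathlib

open Real MeasureTheory

/-- The `n`-th Fourier coefficient of a `2π`-periodic function,
`f̂(n) = (1/2π) ∫₀^{2π} f(t) e^{-int} dt`. -/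
noncomputable def fourierCoef (f : ℝ → ℂ) (n : ℤ) : ℂ :=
  (1 / (2 * (Real.pi : ℂ))) * ∫ t in (0:ℝ)..(2 * Real.pi), f t * Complex.exp (-(Complex.I * n * t))

/-!
For `n ≥ 1` the coefficient `ĝ(-n)` of `g = e^{iNt} f` is `(1/2π) ∫₀^{2π} A e^{iθ}` with phase
`θ = φ + (N + n) t`, and `θ' ≥ c + N + n` where `c = inf φ'`. Writing `e^{iθ} = (e^{iθ})' / (iθ')`
and integrating by parts once (the boundary terms cancel by periodicity) leaves the integral of
`(A / θ')' e^{iθ}`, and `|(A / θ')'| ≤ (|A'| + |A| |φ''| / θ') / θ' ≤ (‖A'‖∞ + ε ‖A‖∞) / (c + N + n)`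
because `|φ''| ≤ ε φ' ≤ ε θ'`. Squaring and comparing with the telescoping series
`1 / (x + k) - 1 / (x + k + 1)` bounds `∑_{n ≥ 1} |ĝ(-n)|²` by `(‖A'‖∞ + ε ‖A‖∞)² / (c + N)`,
and `‖f‖₂ = ‖A‖₂` since `|f| = A`.
-/

open Set Filter Complex

theorem periodic_deriv_of_add_const {𝕜 F : Type*} [NontriviallyNormedField 𝕜]
    [NormedAddCommGroup F] [NormedSpace 𝕜 F] {f : 𝕜 → F} {T : 𝕜} {c : F}
    (h : ∀ x, f (x + T) = f x + c) : Function.Periodic (deriv f) T := fun x => by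
  rw [← deriv_comp_add_const, funext h, deriv_add_const]

theorem abs_le_iSup_abs_of_periodic {g : ℝ → ℝ} {T : ℝ} (hg : Continuous g)
    (hper : Function.Periodic g T) (hT : T ≠ 0) (t : ℝ) : |g t| ≤ ⨆ s, |g s| :=
  have hper_abs : Function.Periodic (fun s => |g s|) T := fun s => by simp only [hper s]
  le_ciSup (hper_abs.isBounded_of_continuous hT hg.abs).bddAbove t

theorem Real.bddBelow_range_of_iInf_ne_zero {ι : Sort*} {g : ι → ℝ} (h : ⨅ i, g i ≠ 0) :
    BddBelow (range g) := by
  by_contra hg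
  exact h (Real.iInf_of_not_bddBelow hg)

theorem ciInf_le_csInf_image {α ι : Type*} [ConditionallyCompleteLattice α] {g : ι → α}
    {s : Set ι} (hg : BddBelow (range g)) (hs : s.Nonempty) : ⨅ i, g i ≤ sInf (g '' s) :=
  le_csInf (hs.image g) (by rintro _ ⟨i, -, rfl⟩; exact ciInf_le hg i)

theorem csInf_image_Ioo_le {g : ℝ → ℝ} {a b : ℝ} (hg : Continuous g) (hab : a < b)
    (hbdd : BddBelow (g '' Ioo a b)) {t : ℝ} (ht : t ∈ Icc a b) : sInf (g '' Ioo a b) ≤ g t := by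
  have hclosed : IsClosed {t | sInf (g '' Ioo a b) ≤ g t} := isClosed_le continuous_const hg
  rw [← closure_Ioo hab.ne] at ht
  exact hclosed.closure_subset_iff.mpr (fun s hs => csInf_le hbdd ⟨s, hs, rfl⟩) ht

theorem abs_mul_sub_mul_div_sq_le {p q r s α β ε L : ℝ} (hL : 0 < L) (hq : L ≤ q)
    (hp : |p| ≤ α) (hr : |r| ≤ β) (hs : |s| ≤ ε * q) :
    |p * q - r * s| / q ^ 2 ≤ (α + ε * β) / L := by
  have hq0 : 0 < q := hL.trans_le hq
  have hε : 0 ≤ ε := nonneg_of_mul_nonneg_left ((abs_nonneg s).trans hs) hq0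
  have hnum : |p * q - r * s| ≤ (α + ε * β) * q := calc
    |p * q - r * s| ≤ |p| * q + |r| * |s| := by
      rw [← abs_of_pos hq0, ← abs_mul, ← abs_mul, abs_of_pos hq0]; exact abs_sub _ _
    _ ≤ α * q + β * (ε * q) := by gcongr; exact (abs_nonneg r).trans hr
    _ = (α + ε * β) * q := by ring
  calc |p * q - r * s| / q ^ 2 ≤ (α + ε * β) * q / q ^ 2 := by gcongr
    _ = (α + ε * β) / q := by field_simp
    _ ≤ (α + ε * β) / L := by
      gcongr
      exact add_nonneg ((abs_nonneg p).trans hp) (mul_nonneg hε ((abs_nonneg r).trans hr))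

section OscillatoryIntegral

variable {a b : ℝ} {A A' θ θ' θ'' : ℝ → ℝ} (hab : a ≤ b)
  (hA : ∀ t ∈ Icc a b, HasDerivAt A (A' t) t) (hθ : ∀ t ∈ Icc a b, HasDerivAt θ (θ' t) t)
  (hθ' : ∀ t ∈ Icc a b, HasDerivAt θ' (θ'' t) t)
  (hA'c : ContinuousOn A' (Icc a b)) (hθ''c : ContinuousOn θ'' (Icc a b))
  (hθ'0 : ∀ t ∈ Icc a b, θ' t ≠ 0)
  (hAab : A b = A a) (hθ'ab : θ' b = θ' a) (hθab : cexp (I * θ b) = cexp (I * θ a))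
include hab hA hθ hθ' hA'c hθ''c hθ'0 hAab hθ'ab hθab

theorem integral_mul_cexp_eq_neg_integral :
    ∫ t in a..b, (A t : ℂ) * cexp (I * θ t) =
      -∫ t in a..b, (((A' t * θ' t - A t * θ'' t) / θ' t ^ 2 : ℝ) : ℂ) / I * cexp (I * θ t) := by
  have hθ'0' : ∀ t ∈ Icc a b, (θ' t : ℂ) ≠ 0 := fun t ht => ofReal_ne_zero.2 (hθ'0 t ht)
  have hu : ∀ t ∈ uIcc a b, HasDerivAt (fun t => (A t : ℂ) / (I * θ' t))
      ((((A' t * θ' t - A t * θ'' t) / θ' t ^ 2 : ℝ) : ℂ) / I) t := by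
    intro t ht
    rw [uIcc_of_le hab] at ht
    refine ((hA t ht).ofReal_comp.div ((hθ' t ht).ofReal_comp.const_mul I)
      (mul_ne_zero I_ne_zero (hθ'0' t ht))).congr_deriv ?_
    have hθ't := hθ'0' t ht
    push_cast
    field_simp
  have hv : ∀ t ∈ uIcc a b,
      HasDerivAt (fun t => cexp (I * θ t)) (cexp (I * θ t) * (I * θ' t)) t :=
    fun t ht => ((hθ t (by rwa [uIcc_of_le hab] at ht)).ofReal_comp.const_mul I).cexp
  have hAc : ContinuousOn A (Icc a b) :=
    continuousOn_of_forall_continuousAt fun t ht => (hA t ht).continuousAt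
  have hθc : ContinuousOn θ (Icc a b) :=
    continuousOn_of_forall_continuousAt fun t ht => (hθ t ht).continuousAt
  have hθ'c : ContinuousOn θ' (Icc a b) :=
    continuousOn_of_forall_continuousAt fun t ht => (hθ' t ht).continuousAt
  have hu'i : IntervalIntegrable (fun t => (((A' t * θ' t - A t * θ'' t) / θ' t ^ 2 : ℝ) : ℂ) / I)
      volume a b := by
    refine ContinuousOn.intervalIntegrable ?_
    rw [uIcc_of_le hab]
    refine (continuous_ofReal.comp_continuousOn ?_).div_const I
    exact ((hA'c.mul hθ'c).sub (hAc.mul hθ''c)).div (hθ'c.pow 2)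
      fun t ht => pow_ne_zero 2 (hθ'0 t ht)
  have hv'i : IntervalIntegrable (fun t => cexp (I * θ t) * (I * θ' t)) volume a b := by
    refine ContinuousOn.intervalIntegrable ?_
    rw [uIcc_of_le hab]
    fun_prop
  have hIBP := intervalIntegral.integral_mul_deriv_eq_deriv_mul hu hv hu'i hv'i
  have hbdry : (A b : ℂ) / (I * θ' b) * cexp (I * θ b) =
      (A a : ℂ) / (I * θ' a) * cexp (I * θ a) := by
    rw [hAab, hθ'ab, hθab]
  rw [hbdry, sub_self, zero_sub] at hIBP
  rw [← hIBP]
  refine intervalIntegral.integral_congr fun t ht => ?_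
  rw [uIcc_of_le hab] at ht
  have hθ't := hθ'0' t ht
  field_simp

theorem norm_integral_mul_cexp_le {K : ℝ}
    (hK : ∀ t ∈ Icc a b, |A' t * θ' t - A t * θ'' t| / θ' t ^ 2 ≤ K) :
    ‖∫ t in a..b, (A t : ℂ) * cexp (I * θ t)‖ ≤ K * (b - a) := by
  rw [integral_mul_cexp_eq_neg_integral hab hA hθ hθ' hA'c hθ''c hθ'0 hAab hθ'ab hθab, norm_neg,
    ← abs_of_nonneg (sub_nonneg.2 hab)]
  refine intervalIntegral.norm_integral_le_of_norm_le_const fun t ht => ?_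
  rw [uIoc_of_le hab] at ht
  rw [norm_mul, norm_div, norm_I, div_one, norm_exp_I_mul_ofReal, mul_one, norm_real, norm_div,
    norm_pow, Real.norm_eq_abs, Real.norm_eq_abs, sq_abs]
  exact hK t (Ioc_subset_Icc_self ht)

end OscillatoryIntegral

theorem fourierCoef_cexp_mul (g : ℝ → ℂ) (N n : ℤ) :
    fourierCoef (fun t => cexp (I * N * t) * g t) n = fourierCoef g (n - N) := by
  unfold fourierCoef
  congr 1
  refine intervalIntegral.integral_congr fun t _ => ?_
  simp only
  rw [mul_comm (cexp _), mul_assoc, ← Complex.exp_add]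
  push_cast
  ring_nf

theorem norm_fourierCoef_neg_le {A φ : ℝ → ℝ} {m : ℤ} {α β ε c : ℝ}
    (hA : ContDiff ℝ 1 A) (hAper : Function.Periodic A (2 * π)) (hφ : ContDiff ℝ 2 φ)
    (hφper : ∀ t, φ (t + 2 * π) = φ t + 2 * π * m) (hc : 0 < c)
    (hcφ : ∀ t ∈ Icc 0 (2 * π), c ≤ deriv φ t) (hα : ∀ t, |deriv A t| ≤ α)
    (hβ : ∀ t, |A t| ≤ β) (hε : 0 ≤ ε) (hφ'' : ∀ t, |deriv (deriv φ) t| ≤ ε * deriv φ t)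
    (n : ℕ) : ‖fourierCoef (fun t => A t * cexp (I * φ t)) (-n)‖ ≤ (α + ε * β) / (c + n) := by
  have h2π : 0 < 2 * π := by positivity
  have hφ' : ContDiff ℝ 1 (deriv φ) := ContDiff.deriv' (n := 1) hφ
  have hθ : ∀ t, HasDerivAt (fun t => φ t + n * t) (deriv φ t + n) t := fun t =>
    ((hφ.differentiable (by norm_num) t).hasDerivAt.add ((hasDerivAt_id t).const_mul _)).congr_deriv
      (by simp)
  have hθ' : ∀ t, HasDerivAt (fun t => deriv φ t + n) (deriv (deriv φ) t) t := fun t =>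
    (hφ'.differentiable one_ne_zero t).hasDerivAt.add_const _
  have hθ'_ge : ∀ t ∈ Icc 0 (2 * π), c + n ≤ deriv φ t + n := fun t ht => by
    linarith [hcφ t ht]
  have hcoef : fourierCoef (fun t => A t * cexp (I * φ t)) (-n) =
      1 / (2 * π) * ∫ t in 0..2 * π, (A t : ℂ) * cexp (I * ↑(φ t + n * t)) := by
    unfold fourierCoef
    congr 1
    refine intervalIntegral.integral_congr fun t _ => ?_
    rw [mul_assoc, ← Complex.exp_add]
    push_cast
    ring_nf
  have hbound := norm_integral_mul_cexp_le (K := (α + ε * β) / (c + n)) h2π.le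
    (fun t _ => (hA.differentiable one_ne_zero t).hasDerivAt) (fun t _ => hθ t) (fun t _ => hθ' t)
    (hA.continuous_deriv le_rfl).continuousOn (hφ'.continuous_deriv le_rfl).continuousOn
    (fun t ht => ((by positivity : 0 < c + n).trans_le (hθ'_ge t ht)).ne')
    (by simpa using hAper 0)
    (by simpa using congrArg (· + (n : ℝ)) (periodic_deriv_of_add_const hφper 0))
    (exp_eq_exp_iff_exists_int.2 ⟨m + n, by
      rw [show φ (2 * π) = φ 0 + 2 * π * m by simpa using hφper 0]; push_cast; ring⟩)
    (fun t ht => abs_mul_sub_mul_div_sq_le (by positivity) (hθ'_ge t ht) (hα t) (hβ t)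
      ((hφ'' t).trans (by nlinarith [hcφ t ht])))
  rw [hcoef, norm_mul]
  calc ‖(1 / (2 * π) : ℂ)‖ * _ ≤ 1 / (2 * π) * ((α + ε * β) / (c + n) * (2 * π - 0)) := by
        gcongr
        simp [abs_of_pos pi_pos]
    _ = (α + ε * β) / (c + n) := by rw [sub_zero]; field_simp

theorem tsum_sq_le_of_le_div_add_succ {r : ℕ → ℝ} {C x : ℝ} (hx : 0 < x)
    (hr : ∀ k, 0 ≤ r k) (hrC : ∀ k, r k ≤ C / (x + (k + 1))) : ∑' k, r k ^ 2 ≤ C ^ 2 / x := by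
  have hstep : ∀ k : ℕ, r k ^ 2 ≤ C ^ 2 * (1 / (x + k) - 1 / (x + (k + 1))) := fun k => by
    have hk : 0 < x + k := by positivity
    calc r k ^ 2 ≤ (C / (x + (k + 1))) ^ 2 := pow_le_pow_left₀ (hr k) (hrC k) 2
      _ = C ^ 2 * (1 / (x + (k + 1)) ^ 2) := by rw [div_pow, mul_one_div]
      _ ≤ C ^ 2 * (1 / ((x + k) * (x + (k + 1)))) := by gcongr; nlinarith
      _ = C ^ 2 * (1 / (x + k) - 1 / (x + (k + 1))) := by field_simp; ring
  refine Real.tsum_le_of_sum_range_le (fun k => sq_nonneg _) fun n => ?_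
  calc ∑ k ∈ Finset.range n, r k ^ 2
      ≤ ∑ k ∈ Finset.range n, C ^ 2 * (1 / (x + k) - 1 / (x + (k + 1))) :=
        Finset.sum_le_sum fun k _ => hstep k
    _ = C ^ 2 * (1 / x - 1 / (x + n)) := by
      rw [← Finset.mul_sum]
      have := Finset.sum_range_sub' (fun k : ℕ => 1 / (x + k)) n
      push_cast at this
      rw [this, add_zero]
    _ ≤ C ^ 2 / x := by
      rw [mul_sub, mul_one_div]
      exact sub_le_self _ (by positivity)

theorem two_pi_mul_sq_add_mul_div_le {α β ε x J : ℝ} (hx : 0 < x) (hJ : 0 < J) :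
    2 * π * ((α + ε * β) ^ 2 / x) ≤ 8 * π ^ 2 / J * (α ^ 2 + ε ^ 2 * β ^ 2) / x * J := by
  have hrhs : 8 * π ^ 2 / J * (α ^ 2 + ε ^ 2 * β ^ 2) / x * J =
      8 * π ^ 2 * (α ^ 2 + ε ^ 2 * β ^ 2) / x := by
    field_simp
  rw [hrhs, mul_div_assoc']
  refine div_le_div_of_nonneg_right ?_ hx.le
  calc 2 * π * (α + ε * β) ^ 2 ≤ 2 * π * (2 * (α ^ 2 + ε ^ 2 * β ^ 2)) := by
        gcongr; nlinarith [sq_nonneg (α - ε * β)]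
    _ = 4 * π * (α ^ 2 + ε ^ 2 * β ^ 2) := by ring
    _ ≤ 8 * π ^ 2 * (α ^ 2 + ε ^ 2 * β ^ 2) := by gcongr <;> nlinarith [pi_gt_three]

/-- For `g = e^{iNt} f`, `‖P₋ g‖²_{L²}` is written via Parseval as `2π ∑_{k ≥ 0} |ĝ(-(k+1))|²`. -/
theorem carrier_frequency_general (ε : ℝ) (hε : 0 < ε) (A φ : ℝ → ℝ) (f : ℝ → ℂ)
    (hA : ContDiff ℝ 1 A) (hAper : Function.Periodic A (2 * π)) (hApos : ∀ t, 0 < A t)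
    (hφ : ContDiff ℝ 2 φ) (m : ℤ) (hφper : ∀ t, φ (t + 2 * π) = φ t + 2 * π * m)
    (hinf : 0 < ⨅ t : ℝ, deriv φ t)
    (hφ'' : ∀ t, |deriv (deriv φ) t| ≤ ε * deriv φ t)
    (hf : ∀ t, f t = (A t : ℂ) * Complex.exp (Complex.I * φ t)) :
    (∀ N : ℕ, 0 < N →
      2 * π * ∑' k : ℕ,
          ‖fourierCoef (fun t => Complex.exp (Complex.I * N * t) * f t) (-((k : ℤ) + 1))‖ ^ 2 ≤
        8 * π ^ 2 / (∫ t in (0:ℝ)..(2 * π), A t ^ 2) *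
          ((⨆ t : ℝ, |deriv A t|) ^ 2 + ε ^ 2 * (⨆ t : ℝ, |A t|) ^ 2) /
            (sInf (deriv φ '' Set.Ioo 0 (2 * π)) + N) *
          ∫ t in (0:ℝ)..(2 * π), ‖f t‖ ^ 2) ∧
    Filter.Tendsto
      (fun N : ℕ =>
        8 * π ^ 2 / (∫ t in (0:ℝ)..(2 * π), A t ^ 2) *
          ((⨆ t : ℝ, |deriv A t|) ^ 2 + ε ^ 2 * (⨆ t : ℝ, |A t|) ^ 2) /
            (sInf (deriv φ '' Set.Ioo 0 (2 * π)) + N) *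
          ∫ t in (0:ℝ)..(2 * π), ‖f t‖ ^ 2)
      Filter.atTop (nhds 0) := by
  obtain rfl : f = _ := funext hf
  set c := sInf (deriv φ '' Ioo 0 (2 * π))
  have h2π : (0 : ℝ) < 2 * π := by positivity
  have hφ'bdd := Real.bddBelow_range_of_iInf_ne_zero hinf.ne'
  have hc : 0 < c := hinf.trans_le (ciInf_le_csInf_image hφ'bdd ⟨π, by constructor <;> linarith⟩)
  have hcφ : ∀ t ∈ Icc 0 (2 * π), c ≤ deriv φ t :=
    fun t => csInf_image_Ioo_le (hφ.continuous_deriv one_le_two) h2π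
      (hφ'bdd.mono (image_subset_range _ _))
  have hcoef (N k : ℕ) :
      ‖fourierCoef (fun t => cexp (I * N * t) * (A t * cexp (I * φ t))) (-((k : ℤ) + 1))‖ ≤
        ((⨆ t, |deriv A t|) + ε * ⨆ t, |A t|) / (c + N + (k + 1)) := by
    have hmod := fourierCoef_cexp_mul (fun t => A t * cexp (I * φ t)) N (-((k : ℤ) + 1))
    push_cast at hmod
    rw [hmod, show -((k : ℤ) + 1) - N = -((N + k + 1 : ℕ) : ℤ) by push_cast; ring]
    have hA'per : Function.Periodic (deriv A) (2 * π) :=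
      periodic_deriv_of_add_const (c := 0) (by simpa using hAper)
    convert norm_fourierCoef_neg_le hA hAper hφ hφper hc hcφ
      (abs_le_iSup_abs_of_periodic (hA.continuous_deriv le_rfl) hA'per h2π.ne')
      (abs_le_iSup_abs_of_periodic hA.continuous hAper h2π.ne') hε.le hφ'' (N + k + 1) using 2
    push_cast
    ring
  have hnorm_f : ∫ t in 0..2 * π, ‖(A t : ℂ) * cexp (I * φ t)‖ ^ 2 = ∫ t in 0..2 * π, A t ^ 2 := by
    simp only [norm_mul, norm_exp_I_mul_ofReal, norm_real, Real.norm_eq_abs, mul_one, sq_abs]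
  have hJ : 0 < ∫ t in 0..2 * π, A t ^ 2 :=
    intervalIntegral.intervalIntegral_pos_of_pos_on ((hA.continuous.pow 2).intervalIntegrable _ _)
      (fun t _ => pow_pos (hApos t) 2) h2π
  refine ⟨fun N _ => ?_, ?_⟩
  · rw [hnorm_f]
    calc _ ≤ 2 * π * (((⨆ t, |deriv A t|) + ε * ⨆ t, |A t|) ^ 2 / (c + N)) := by
          gcongr
          exact tsum_sq_le_of_le_div_add_succ (by positivity) (fun k => norm_nonneg _) (hcoef N)
      _ ≤ _ := two_pi_mul_sq_add_mul_div_le (by positivity) hJ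
  · simpa using (tendsto_const_nhds.div_atTop
      (tendsto_atTop_add_const_left _ c tendsto_natCast_atTop_atTop)).mul_const _

/-- Adding a carrier frequency `e^{iNt}` to an intrinsic-mode type function `f = A e^{iφ}`
makes the anti-holomorphic part small: `‖P₋(e^{iNt} f)‖²_{L²}` (computed via Plancherel as
`2π Σ_{n<0} |ĝ(n)|²` for `g = e^{iNt} f`) is bounded by the stated quantity, and in
particular the bound tends to `0` as `N → ∞`. -/
theorem carrier_frequency (ε : ℝ) (hε : 0 < ε) (A φ : ℝ → ℝ) (f : ℝ → ℂ)
    (hA : ContDiff ℝ 1 A) (hAper : Function.Periodic A (2 * π)) (hApos : ∀ t, 0 < A t)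
    (hφ : ContDiff ℝ 2 φ) (m : ℤ) (hφper : ∀ t, φ (t + 2 * π) = φ t + 2 * π * m)
    (hinf : 0 < ⨅ t : ℝ, deriv φ t) (hsup : BddAbove (Set.range (deriv φ)))
    (hA' : ∀ t, |deriv A t| ≤ ε * deriv φ t)
    (hφ'' : ∀ t, |deriv (deriv φ) t| ≤ ε * deriv φ t)
    (hf : ∀ t, f t = (A t : ℂ) * Complex.exp (Complex.I * φ t)) :
    (∀ N : ℕ, 0 < N →
      2 * π * ∑' k : ℕ,
          ‖fourierCoef (fun t => Complex.exp (Complex.I * N * t) * f t) (-((k : ℤ) + 1))‖ ^ 2 ≤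
        8 * π ^ 2 / (∫ t in (0:ℝ)..(2 * π), A t ^ 2) *
          ((⨆ t : ℝ, |deriv A t|) ^ 2 + ε ^ 2 * (⨆ t : ℝ, |A t|) ^ 2) /
            (sInf (deriv φ '' Set.Ioo 0 (2 * π)) + N) *
          ∫ t in (0:ℝ)..(2 * π), ‖f t‖ ^ 2) ∧
    Filter.Tendsto
      (fun N : ℕ =>
        8 * π ^ 2 / (∫ t in (0:ℝ)..(2 * π), A t ^ 2) *
          ((⨆ t : ℝ, |deriv A t|) ^ 2 + ε ^ 2 * (⨆ t : ℝ, |A t|) ^ 2) /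
            (sInf (deriv φ '' Set.Ioo 0 (2 * π)) + N) *
          ∫ t in (0:ℝ)..(2 * π), ‖f t‖ ^ 2)
      Filter.atTop (nhds 0) :=
  carrier_frequency_general ε hε A φ f hA hAper hApos hφ m hφper hinf hφ'' hf
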